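/- (Prediction Validation Theorem, right sub-domain.) Let a > 0, T_s ∈ ℝ, τ > 0, and X_A = X_{1A} < X_{2A} < X_{1B} < X_{2B} = X_B. Let u be a classical solution of the 1-D wave equation with speed a on [X_A, X_B] × [T_s, T_s + τ]. Let p̂₂ be a classical solution of the 1-D wave equation with speed a on [X_{2A}, X_{2B}] × [T_s, T_s + τ] satisfying the predictive problem: p̂₂(x, T_s) = u(x, T_s) and ∂p̂₂/∂t(x, T_s) = ∂u/∂t(x, T_s) for all x ∈ [X_{2A}, X_{2B}]; p̂₂(X_{2B}, t) = u(X_{2B}, t) for all t ∈ [T_s, T_s + τ]; and the zero-flux prediction ∂p̂₂/∂x(X_{2A}, t) = 0 for all t ∈ [T_s, T_s + τ]. Then p̂₂(x,t) = u(x,t) for every (x,t) with x ∈ [X_{2A}, X_{2B}], t ∈ [T_s, T_s + τ] and a·(t − T_s) ≤ x − X_{2A}; in particular, at the output boundary x = X_{1B} one has p̂₂(X_{1B}, t) = u(X_{1B}, t) and ∂p̂₂/∂x(X_{1B}, t) = ∂u/∂x(X_{1B}, t) for all t ∈ [T_s, T_s + τ] with a·(t − T_s) ≤ X_{1B} − X_{2A}.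 -/

import Mathlib

/-!
Put `w = p̂₂ - u`: it is again a wave solution on `[X₂A, X₂B] × [Tₛ, Tₛ + τ]`, with zero Cauchy
data at `t = Tₛ` and `w = 0` on `x = X₂B`. The Riemann invariants `w_t - a w_x` and `w_t + a w_x`
are constant along the characteristics of slope `a` and `-a` respectively. Traced back from a
point of the cone `a (t - Tₛ) ≤ x - X₂A`, the first characteristic stays in the rectangle until
it reaches the initial line; the second one reaches either the initial line or the boundary
`x = X₂B`, where `w_t = 0` and `w_t - a w_x` vanishes by the first case. Hence the gradient of `w`
vanishes on the cone, and so does `w`.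
-/

/-- `p` is a classical solution of the 1-D wave equation with speed `a` on
`[c, d] × [T₀, T₁]`: it is twice continuously differentiable on an open
neighbourhood of the rectangle and satisfies
`∂²p/∂t² = a² ∂²p/∂x²` there. -/
def IsWaveSolution (a c d T₀ T₁ : ℝ) (p : ℝ → ℝ → ℝ) : Prop :=
  ∃ U : Set (ℝ × ℝ), IsOpen U ∧ (Set.Icc c d ×ˢ Set.Icc T₀ T₁) ⊆ U ∧
    ContDiffOn ℝ 2 (fun q : ℝ × ℝ => p q.1 q.2) U ∧
    ∀ x ∈ Set.Icc c d, ∀ t ∈ Set.Icc T₀ T₁,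
      deriv (deriv (fun s => p x s)) t = a ^ 2 * deriv (deriv (fun y => p y t)) x

open Set Topology Function

section Calculus

variable {E F : Type*} [NormedAddCommGroup E] [NormedSpace ℝ E]
  [NormedAddCommGroup F] [NormedSpace ℝ F]

theorem eq_of_hasFDerivAt_of_apply_sub_eq_zero {f : E → F} {f' : E → E →L[ℝ] F} {p q : E}
    (hf : ∀ z ∈ segment ℝ p q, HasFDerivAt f (f' z) z)
    (h : ∀ z ∈ segment ℝ p q, f' z (q - p) = 0) : f q = f p := by
  have hmem : ∀ r ∈ Icc (0 : ℝ) 1, p + r • (q - p) ∈ segment ℝ p q := fun r hr => by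
    rw [segment_eq_image']; exact ⟨r, hr, rfl⟩
  have hg : ∀ r ∈ Icc (0 : ℝ) 1, HasDerivAt (fun r : ℝ => f (p + r • (q - p))) 0 r := by
    intro r hr
    have hline : HasDerivAt (fun r : ℝ => p + r • (q - p)) (q - p) r := by
      simpa using ((hasDerivAt_id r).smul_const (q - p)).const_add p
    have hcomp := (hf _ (hmem r hr)).comp_hasDerivAt r hline
    rwa [h _ (hmem r hr)] at hcomp
  simpa using constant_of_has_deriv_right_zero
    (fun r hr => (hg r hr).continuousAt.continuousWithinAt)
    (fun r hr => (hg r (Ico_subset_Icc_self hr)).hasDerivWithinAt) 1 (right_mem_Icc.2 zero_le_one)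

theorem HasDerivAt.eq_zero_of_eqOn_Icc {g : ℝ → F} {g' : F} {c d y : ℝ} (hcd : c < d)
    (hy : y ∈ Icc c d) (hg : HasDerivAt g g' y) (h0 : EqOn g 0 (Icc c d)) : g' = 0 :=
  (uniqueDiffOn_Icc hcd y hy).eq_deriv _ hg.hasDerivWithinAt
    ((hasDerivWithinAt_const y _ 0).congr h0 (h0 hy))

theorem deriv_deriv_comp_eq_fderiv_fderiv {Φ : E → F} {γ : ℝ → E} {v : E} {t : ℝ}
    (hΦ : ContDiffAt ℝ 2 Φ (γ t)) (hγ : ∀ r, HasDerivAt γ v r) :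
    deriv (deriv fun r => Φ (γ r)) t = fderiv ℝ (fderiv ℝ Φ) (γ t) v v := by
  have hfirst : deriv (fun r => Φ (γ r)) =ᶠ[𝓝 t] fun r => fderiv ℝ Φ (γ r) v := by
    filter_upwards [(hγ t).continuousAt.tendsto.eventually (hΦ.eventually (by simp))] with r hr
    exact ((hr.differentiableAt (by norm_num)).hasFDerivAt.comp_hasDerivAt r (hγ r)).deriv
  have hΦ' : DifferentiableAt ℝ (fderiv ℝ Φ) (γ t) :=
    (hΦ.fderiv_right (m := 1) (by norm_num)).differentiableAt one_ne_zero
  rw [hfirst.deriv_eq]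
  simpa using ((hΦ'.hasFDerivAt.comp_hasDerivAt t (hγ t)).clm_apply (hasDerivAt_const t v)).deriv

end Calculus

section Slices

variable {F : Type*} [NormedAddCommGroup F] [NormedSpace ℝ F] {w : ℝ → ℝ → F} {x t : ℝ}

theorem DifferentiableAt.hasDerivAt_slice_fst (h : DifferentiableAt ℝ (uncurry w) (x, t)) :
    HasDerivAt (fun y => w y t) (fderiv ℝ (uncurry w) (x, t) (1, 0)) x :=
  h.hasFDerivAt.comp_hasDerivAt (f := fun y => (y, t)) x
    ((hasDerivAt_id' x).prodMk (hasDerivAt_const x t))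

theorem DifferentiableAt.hasDerivAt_slice_snd (h : DifferentiableAt ℝ (uncurry w) (x, t)) :
    HasDerivAt (fun s => w x s) (fderiv ℝ (uncurry w) (x, t) (0, 1)) t :=
  h.hasFDerivAt.comp_hasDerivAt (f := fun s => (x, s)) t
    ((hasDerivAt_const t x).prodMk (hasDerivAt_id' t))

end Slices

theorem ContinuousLinearMap.eq_zero_of_map_char_eq_zero {F : Type*} [NormedAddCommGroup F]
    [NormedSpace ℝ F] {L : ℝ × ℝ →L[ℝ] F} {a : ℝ} (ha : a ≠ 0) (hp : L (a, 1) = 0)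
    (hm : L (-a, 1) = 0) : L = 0 := by
  have hx : (2 * a) • L (1, 0) = 0 := by
    have : (2 * a) • ((1 : ℝ), (0 : ℝ)) = ((a, 1) - (-a, 1) : ℝ × ℝ) := by
      ext <;> simp; ring
    rw [← map_smul, this, map_sub, hp, hm, sub_zero]
  have ht : (2 : ℝ) • L (0, 1) = 0 := by
    have : (2 : ℝ) • ((0 : ℝ), (1 : ℝ)) = ((a, 1) + (-a, 1) : ℝ × ℝ) := by
      ext <;> simp; norm_num
    rw [← map_smul, this, map_add, hp, hm, add_zero]
  ext
  · simpa [ha] using hx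
  · simpa using ht

namespace IsWaveSolution

variable {a c d T₀ T₁ : ℝ} {w : ℝ → ℝ → ℝ}

theorem mono (hw : IsWaveSolution a c d T₀ T₁ w) {c' d' : ℝ} (hc : c ≤ c') (hd : d' ≤ d) :
    IsWaveSolution a c' d' T₀ T₁ w := by
  obtain ⟨U, hU, hRU, hw₂, hpde⟩ := hw
  exact ⟨U, hU, (prod_mono (Icc_subset_Icc hc hd) le_rfl).trans hRU, hw₂,
    fun x hx t ht => hpde x (Icc_subset_Icc hc hd hx) t ht⟩

theorem contDiffAt (hw : IsWaveSolution a c d T₀ T₁ w) {q : ℝ × ℝ}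
    (hq : q ∈ Icc c d ×ˢ Icc T₀ T₁) : ContDiffAt ℝ 2 (uncurry w) q := by
  obtain ⟨U, hU, hRU, hw₂, -⟩ := hw
  exact hw₂.contDiffAt (hU.mem_nhds (hRU hq))

theorem differentiableAt_slice_fst (hw : IsWaveSolution a c d T₀ T₁ w) {x t : ℝ}
    (hx : x ∈ Icc c d) (ht : t ∈ Icc T₀ T₁) : DifferentiableAt ℝ (fun y => w y t) x :=
  ((hw.contDiffAt (mk_mem_prod hx ht)).differentiableAt (by norm_num)).hasDerivAt_slice_fst
    |>.differentiableAt

theorem differentiableAt_slice_snd (hw : IsWaveSolution a c d T₀ T₁ w) {x t : ℝ}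
    (hx : x ∈ Icc c d) (ht : t ∈ Icc T₀ T₁) : DifferentiableAt ℝ (fun s => w x s) t :=
  ((hw.contDiffAt (mk_mem_prod hx ht)).differentiableAt (by norm_num)).hasDerivAt_slice_snd
    |>.differentiableAt

theorem sub {p u : ℝ → ℝ → ℝ} (hp : IsWaveSolution a c d T₀ T₁ p)
    (hu : IsWaveSolution a c d T₀ T₁ u) :
    IsWaveSolution a c d T₀ T₁ (fun x t => p x t - u x t) := by
  obtain ⟨Up, hUp, hRp, hp₂, hpde_p⟩ := id hp
  obtain ⟨Uu, hUu, hRu, hu₂, hpde_u⟩ := id hu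
  refine ⟨Up ∩ Uu, hUp.inter hUu, subset_inter hRp hRu,
    (hp₂.mono inter_subset_left).sub (hu₂.mono inter_subset_right), fun x hx t ht => ?_⟩
  have hpC := hp.contDiffAt (mk_mem_prod hx ht)
  have huC := hu.contDiffAt (mk_mem_prod hx ht)
  have hps : ContDiffAt ℝ 2 (fun s => p x s) t := hpC.comp t (contDiffAt_const.prodMk contDiffAt_id)
  have hus : ContDiffAt ℝ 2 (fun s => u x s) t := huC.comp t (contDiffAt_const.prodMk contDiffAt_id)
  have hpy : ContDiffAt ℝ 2 (fun y => p y t) x := hpC.comp x (contDiffAt_id.prodMk contDiffAt_const)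
  have huy : ContDiffAt ℝ 2 (fun y => u y t) x := huC.comp x (contDiffAt_id.prodMk contDiffAt_const)
  have hiter : ∀ f : ℝ → ℝ, deriv (deriv f) = iteratedDeriv 2 f := fun f => by
    rw [iteratedDeriv_eq_iterate]; rfl
  show deriv (deriv fun s => p x s - u x s) t = a ^ 2 * deriv (deriv fun y => p y t - u y t) x
  rw [hiter, hiter, iteratedDeriv_fun_sub hps hus, iteratedDeriv_fun_sub hpy huy, ← hiter, ← hiter,
    ← hiter, ← hiter, hpde_p x hx t ht, hpde_u x hx t ht, mul_sub]

theorem fderiv_fderiv_apply_eq (hw : IsWaveSolution a c d T₀ T₁ w) {q : ℝ × ℝ}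
    (hq : q ∈ Icc c d ×ˢ Icc T₀ T₁) :
    fderiv ℝ (fderiv ℝ (uncurry w)) q (0, 1) (0, 1)
      = a ^ 2 * fderiv ℝ (fderiv ℝ (uncurry w)) q (1, 0) (1, 0) := by
  obtain ⟨x, t⟩ := q
  have htt : deriv (deriv fun s => w x s) t
      = fderiv ℝ (fderiv ℝ (uncurry w)) (x, t) (0, 1) (0, 1) :=
    deriv_deriv_comp_eq_fderiv_fderiv (Φ := uncurry w) (γ := fun s => (x, s)) (hw.contDiffAt hq)
      fun r => (hasDerivAt_const r x).prodMk (hasDerivAt_id' r)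
  have hxx : deriv (deriv fun y => w y t) x
      = fderiv ℝ (fderiv ℝ (uncurry w)) (x, t) (1, 0) (1, 0) :=
    deriv_deriv_comp_eq_fderiv_fderiv (Φ := uncurry w) (γ := fun y => (y, t)) (hw.contDiffAt hq)
      fun r => (hasDerivAt_id' r).prodMk (hasDerivAt_const r t)
  obtain ⟨-, -, -, -, hpde⟩ := hw
  rw [← htt, ← hxx]
  exact hpde x hq.1 t hq.2

theorem fderiv_fderiv_apply_char_eq_zero (hw : IsWaveSolution a c d T₀ T₁ w) {q : ℝ × ℝ}
    (hq : q ∈ Icc c d ×ˢ Icc T₀ T₁) {b : ℝ} (hb : b ^ 2 = a ^ 2) :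
    fderiv ℝ (fderiv ℝ (uncurry w)) q (b, 1) (-b, 1) = 0 := by
  have hsymm := (hw.contDiffAt hq).isSymmSndFDerivAt (by simp) (1, 0) (0, 1)
  have hpde := hw.fderiv_fderiv_apply_eq hq
  have hdecomp : ∀ e : ℝ, ((e, 1) : ℝ × ℝ) = e • ((1 : ℝ), (0 : ℝ)) + ((0 : ℝ), (1 : ℝ)) :=
    fun e => by ext <;> simp
  rw [hdecomp b, hdecomp (-b)]
  simp only [map_add, map_smul, add_apply, smul_apply, smul_eq_mul]
  rw [hsymm, hpde]
  linear_combination -(fderiv ℝ (fderiv ℝ (uncurry w)) q (1, 0) (1, 0)) * hb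

theorem fderiv_apply_char_eq (hw : IsWaveSolution a c d T₀ T₁ w) {b : ℝ} (hb : b ^ 2 = a ^ 2)
    {p q : ℝ × ℝ} (hp : p ∈ Icc c d ×ˢ Icc T₀ T₁) (hq : q ∈ Icc c d ×ˢ Icc T₀ T₁)
    (hpq : q.1 - p.1 = b * (q.2 - p.2)) :
    fderiv ℝ (uncurry w) q (-b, 1) = fderiv ℝ (uncurry w) p (-b, 1) := by
  have hseg : segment ℝ p q ⊆ Icc c d ×ˢ Icc T₀ T₁ :=
    ((convex_Icc c d).prod (convex_Icc T₀ T₁)).segment_subset hp hq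
  have hdir : q - p = (q.2 - p.2) • ((b, 1) : ℝ × ℝ) := by
    ext
    · simp [← hpq, mul_comm]
    · simp
  refine eq_of_hasFDerivAt_of_apply_sub_eq_zero
    (f := fun z => fderiv ℝ (uncurry w) z (-b, 1))
    (f' := fun z => (fderiv ℝ (fderiv ℝ (uncurry w)) z).flip (-b, 1)) (fun z hz => ?_)
    (fun z hz => ?_)
  · have hd : DifferentiableAt ℝ (fderiv ℝ (uncurry w)) z :=
      ((hw.contDiffAt (hseg hz)).fderiv_right (m := 1) (by norm_num)).differentiableAt
        one_ne_zero
    simpa using hd.hasFDerivAt.clm_apply (hasFDerivAt_const ((-b, 1) : ℝ × ℝ) z)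
  · rw [ContinuousLinearMap.flip_apply, hdir, map_smul, smul_apply,
      hw.fderiv_fderiv_apply_char_eq_zero (hseg hz) hb, smul_zero]

theorem fderiv_apply_neg_char_eq_zero (hw : IsWaveSolution a c d T₀ T₁ w) (ha : 0 ≤ a)
    (h₀ : ∀ x ∈ Icc c d, fderiv ℝ (uncurry w) (x, T₀) = 0) {x t : ℝ} (hx : x ∈ Icc c d)
    (ht : t ∈ Icc T₀ T₁) (hxt : a * (t - T₀) ≤ x - c) :
    fderiv ℝ (uncurry w) (x, t) (-a, 1) = 0 := by
  have hfoot : x - a * (t - T₀) ∈ Icc c d :=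
    ⟨by linarith, by nlinarith [hx.2, ht.1]⟩
  rw [hw.fderiv_apply_char_eq rfl (mk_mem_prod hfoot (left_mem_Icc.2 (ht.1.trans ht.2)))
    (mk_mem_prod hx ht) (by ring), h₀ _ hfoot, zero_apply]

/-- The backward characteristic either reaches the initial line or hits `x = d` at time
`t - (d - x) / a`, where `w_t = 0` and `fderiv_apply_neg_char_eq_zero` applies. -/
theorem fderiv_apply_pos_char_eq_zero (hw : IsWaveSolution a c d T₀ T₁ w) (ha : 0 < a)
    (h₀ : ∀ x ∈ Icc c d, fderiv ℝ (uncurry w) (x, T₀) = 0)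
    (hd : ∀ t ∈ Icc T₀ T₁, fderiv ℝ (uncurry w) (d, t) (0, 1) = 0) {x t : ℝ}
    (hx : x ∈ Icc c d) (ht : t ∈ Icc T₀ T₁) (hxt : a * (t - T₀) ≤ x - c) :
    fderiv ℝ (uncurry w) (x, t) (a, 1) = 0 := by
  have hchar : ∀ {p : ℝ × ℝ}, p ∈ Icc c d ×ˢ Icc T₀ T₁ → x - p.1 = -a * (t - p.2) →
      fderiv ℝ (uncurry w) (x, t) (a, 1) = fderiv ℝ (uncurry w) p (a, 1) := fun hp hpq => by
    simpa using hw.fderiv_apply_char_eq (b := -a) (by ring) hp (mk_mem_prod hx ht) hpq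
  by_cases hreach : x + a * (t - T₀) ≤ d
  · have hfoot : x + a * (t - T₀) ∈ Icc c d := ⟨by nlinarith [hx.1, ht.1], hreach⟩
    rw [hchar (mk_mem_prod hfoot (left_mem_Icc.2 (ht.1.trans ht.2))) (by ring), h₀ _ hfoot,
      zero_apply]
  · have hdx : a * ((d - x) / a) = d - x := mul_div_cancel₀ _ ha.ne'
    have hs : t - (d - x) / a ∈ Icc T₀ T₁ := by
      constructor <;> nlinarith [hx.2, ht.2, div_nonneg (sub_nonneg.2 hx.2) ha.le]
    have hdd : d ∈ Icc c d := right_mem_Icc.2 (hx.1.trans hx.2)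
    have hsplit : ((a, 1) : ℝ × ℝ) = (2 : ℝ) • ((0 : ℝ), (1 : ℝ)) - (-a, 1) := by
      ext <;> simp; norm_num
    rw [hchar (mk_mem_prod hdd hs) (by simp only; linarith), hsplit, map_sub, map_smul,
      hd _ hs, hw.fderiv_apply_neg_char_eq_zero ha.le h₀ hdd hs (by nlinarith [hx.2]),
      smul_zero, sub_zero]

theorem fderiv_eq_zero_of_cone (hw : IsWaveSolution a c d T₀ T₁ w) (ha : 0 < a)
    (h₀ : ∀ x ∈ Icc c d, fderiv ℝ (uncurry w) (x, T₀) = 0)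
    (hd : ∀ t ∈ Icc T₀ T₁, fderiv ℝ (uncurry w) (d, t) (0, 1) = 0) {x t : ℝ}
    (hx : x ∈ Icc c d) (ht : t ∈ Icc T₀ T₁) (hxt : a * (t - T₀) ≤ x - c) :
    fderiv ℝ (uncurry w) (x, t) = 0 :=
  ContinuousLinearMap.eq_zero_of_map_char_eq_zero ha.ne'
    (hw.fderiv_apply_pos_char_eq_zero ha h₀ hd hx ht hxt)
    (hw.fderiv_apply_neg_char_eq_zero ha.le h₀ hx ht hxt)

theorem eq_zero_of_cone (hw : IsWaveSolution a c d T₀ T₁ w) (ha : 0 < a) (hcd : c < d)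
    (hT : T₀ < T₁) (h₀ : ∀ x ∈ Icc c d, w x T₀ = 0)
    (h₀' : ∀ x ∈ Icc c d, deriv (fun s => w x s) T₀ = 0) (hd : ∀ t ∈ Icc T₀ T₁, w d t = 0)
    {x t : ℝ} (hx : x ∈ Icc c d) (ht : t ∈ Icc T₀ T₁) (hxt : a * (t - T₀) ≤ x - c) :
    w x t = 0 ∧ deriv (fun y => w y t) x = 0 := by
  have hdiff : ∀ {y s : ℝ}, y ∈ Icc c d → s ∈ Icc T₀ T₁ →
      DifferentiableAt ℝ (uncurry w) (y, s) := fun hy hs =>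
    (hw.contDiffAt (mk_mem_prod hy hs)).differentiableAt (by norm_num)
  have hT₀ : T₀ ∈ Icc T₀ T₁ := left_mem_Icc.2 hT.le
  have hinit : ∀ y ∈ Icc c d, fderiv ℝ (uncurry w) (y, T₀) = 0 := by
    intro y hy
    ext
    · exact (hdiff hy hT₀).hasDerivAt_slice_fst.eq_zero_of_eqOn_Icc hcd hy h₀
    · exact (hdiff hy hT₀).hasDerivAt_slice_snd.deriv.symm.trans (h₀' y hy)
  have hbdry : ∀ s ∈ Icc T₀ T₁, fderiv ℝ (uncurry w) (d, s) (0, 1) = 0 := fun s hs =>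
    (hdiff (right_mem_Icc.2 hcd.le) hs).hasDerivAt_slice_snd.eq_zero_of_eqOn_Icc hT hs hd
  have hcone : ∀ s ∈ Icc T₀ t, fderiv ℝ (uncurry w) (x, s) = 0 := fun s hs =>
    hw.fderiv_eq_zero_of_cone ha hinit hbdry hx ⟨hs.1, hs.2.trans ht.2⟩
      (by nlinarith [hs.2])
  have hseg : segment ℝ (x, T₀) (x, t) = (fun s => (x, s)) '' Icc T₀ t := by
    rw [← Prod.image_mk_segment_right, segment_eq_Icc ht.1]
  constructor
  · have hvert : uncurry w (x, t) = uncurry w (x, T₀) := by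
      refine eq_of_hasFDerivAt_of_apply_sub_eq_zero (f' := fderiv ℝ (uncurry w)) ?_ ?_ <;>
        simp only [hseg, forall_mem_image] <;> intro s hs
      · exact (hdiff hx ⟨hs.1, hs.2.trans ht.2⟩).hasFDerivAt
      · rw [hcone s hs, zero_apply]
    simpa [h₀ x hx] using hvert
  · rw [(hdiff hx ht).hasDerivAt_slice_fst.deriv, hcone t (right_mem_Icc.2 ht.1), zero_apply]

end IsWaveSolution

theorem prediction_validation_right_general
    (a T_s τ X_A X1A X2A X1B X2B X_B : ℝ)
    (ha : 0 < a) (hτ : 0 < τ)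
    (hA : X_A = X1A) (h1 : X1A < X2A) (h2 : X2A < X1B) (h3 : X1B < X2B)
    (hB : X2B = X_B)
    (u phat₂ : ℝ → ℝ → ℝ)
    (hu : IsWaveSolution a X_A X_B T_s (T_s + τ) u)
    (hp : IsWaveSolution a X2A X2B T_s (T_s + τ) phat₂)
    (hinit : ∀ x ∈ Set.Icc X2A X2B, phat₂ x T_s = u x T_s)
    (hinit' : ∀ x ∈ Set.Icc X2A X2B,
      deriv (fun s => phat₂ x s) T_s = deriv (fun s => u x s) T_s)
    (hDir : ∀ t ∈ Set.Icc T_s (T_s + τ), phat₂ X2B t = u X2B t) :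
    (∀ x ∈ Set.Icc X2A X2B, ∀ t ∈ Set.Icc T_s (T_s + τ),
      a * (t - T_s) ≤ x - X2A → phat₂ x t = u x t) ∧
    (∀ t ∈ Set.Icc T_s (T_s + τ), a * (t - T_s) ≤ X1B - X2A →
      phat₂ X1B t = u X1B t ∧
      deriv (fun y => phat₂ y t) X1B = deriv (fun y => u y t) X1B) := by
  have hu₂ : IsWaveSolution a X2A X2B T_s (T_s + τ) u := hu.mono (by linarith) hB.le
  have hT₀ : T_s ∈ Icc T_s (T_s + τ) := left_mem_Icc.2 (by linarith)
  have hw := hp.sub hu₂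
  have hcone := fun {x t : ℝ} (hx : x ∈ Icc X2A X2B) (ht : t ∈ Icc T_s (T_s + τ)) =>
    hw.eq_zero_of_cone ha (h2.trans h3) (by linarith) (fun y hy => sub_eq_zero.2 (hinit y hy))
      (fun y hy => by
        rw [deriv_fun_sub (hp.differentiableAt_slice_snd hy hT₀)
          (hu₂.differentiableAt_slice_snd hy hT₀), hinit' y hy, sub_self])
      (fun s hs => sub_eq_zero.2 (hDir s hs)) hx ht
  refine ⟨fun x hx t ht hxt => sub_eq_zero.1 (hcone hx ht hxt).1, fun t ht hxt => ?_⟩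
  have hX1B : X1B ∈ Icc X2A X2B := ⟨h2.le, h3.le⟩
  obtain ⟨hvalue, hflux⟩ := hcone hX1B ht hxt
  rw [deriv_fun_sub (hp.differentiableAt_slice_fst hX1B ht)
    (hu₂.differentiableAt_slice_fst hX1B ht)] at hflux
  exact ⟨sub_eq_zero.1 hvalue, sub_eq_zero.1 hflux⟩

/-- Prediction Validation Theorem, right sub-domain: the zero-flux predictive
solution on Ω₂ agrees with the true solution wherever the backward light cone
does not reach the input boundary x = X₂A; in particular its value and output
flux at the output boundary x = X₁B agree with the true solution's for
a·(t − Tₛ) ≤ X₁B − X₂A. -/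
theorem prediction_validation_right
    (a T_s τ X_A X1A X2A X1B X2B X_B : ℝ)
    (ha : 0 < a) (hτ : 0 < τ)
    (hA : X_A = X1A) (h1 : X1A < X2A) (h2 : X2A < X1B) (h3 : X1B < X2B)
    (hB : X2B = X_B)
    (u phat₂ : ℝ → ℝ → ℝ)
    (hu : IsWaveSolution a X_A X_B T_s (T_s + τ) u)
    (hp : IsWaveSolution a X2A X2B T_s (T_s + τ) phat₂)
    (hinit : ∀ x ∈ Set.Icc X2A X2B, phat₂ x T_s = u x T_s)
    (hinit' : ∀ x ∈ Set.Icc X2A X2B,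
      deriv (fun s => phat₂ x s) T_s = deriv (fun s => u x s) T_s)
    (hDir : ∀ t ∈ Set.Icc T_s (T_s + τ), phat₂ X2B t = u X2B t)
    (hzero : ∀ t ∈ Set.Icc T_s (T_s + τ), deriv (fun y => phat₂ y t) X2A = 0) :
    (∀ x ∈ Set.Icc X2A X2B, ∀ t ∈ Set.Icc T_s (T_s + τ),
      a * (t - T_s) ≤ x - X2A → phat₂ x t = u x t) ∧
    (∀ t ∈ Set.Icc T_s (T_s + τ), a * (t - T_s) ≤ X1B - X2A →
      phat₂ X1B t = u X1B t ∧
      deriv (fun y => phat₂ y t) X1B = deriv (fun y => u y t) X1B) :=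
  prediction_validation_right_general a T_s τ X_A X1A X2A X1B X2B X_B ha hτ hA h1 h2 h3 hB u phat₂
    hu hp hinit hinit' hDir
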